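/- Let k be a field and consider the ring homomorphism k(t) ⊗_k k(s) → k(t) induced by p(t) ⊗ q(s) ↦ p(t)q(t), where k(t) and k(s) are fields of rational functions in one variable. The kernel of this homomorphism is the ideal of k(t) ⊗_k k(s) generated by t ⊗ 1 − 1 ⊗ s. -/

import Mathlib

/-!
The kernel of the multiplication map is generated by the elements `1 ⊗ a - a ⊗ 1`. Modulo the
ideal generated by `1 ⊗ X - X ⊗ 1`, the two inclusions `k(t) → k(t) ⊗ k(t)` agree on `X`; since
`k(t)` is generated by `X` as a field, they agree everywhere, so all `1 ⊗ a - a ⊗ 1` lie in it.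
-/

open TensorProduct

namespace IntermediateField

variable {F E K : Type*} [Field F] [Field E] [Algebra F E] [Semiring K] [Algebra F K]

theorem algHom_ext_of_adjoin_eq_top {s : Set E} (hs : adjoin F s = ⊤) ⦃φ₁ φ₂ : E →ₐ[F] K⦄
    (h : Set.EqOn φ₁ φ₂ s) : φ₁ = φ₂ := by
  have hres : φ₁.comp (adjoin F s).val = φ₂.comp (adjoin F s).val :=
    adjoin_algHom_ext F fun x hx ↦ h hx
  ext x
  simpa using congr($hres ⟨x, hs ▸ mem_top⟩)

end IntermediateField

namespace KaehlerDifferential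

variable {F E : Type*} [Field F] [Field E] [Algebra F E]

theorem ideal_eq_span_of_adjoin_eq_top {s : Set E} (hs : IntermediateField.adjoin F s = ⊤) :
    ideal F E = Ideal.span ((fun a ↦ (1 : E) ⊗ₜ[F] a - a ⊗ₜ[F] 1) '' s) := by
  set I := Ideal.span ((fun a ↦ (1 : E) ⊗ₜ[F] a - a ⊗ₜ[F] 1) '' s)
  refine le_antisymm ?_ ?_
  · rw [← span_range_eq_ideal, Ideal.span_le]
    rintro _ ⟨x, rfl⟩
    have h_incl_eq :
        (IsScalarTower.toAlgHom F (E ⊗[F] E) (E ⊗[F] E ⧸ I)).comp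
            Algebra.TensorProduct.includeRight =
          (IsScalarTower.toAlgHom F (E ⊗[F] E) (E ⊗[F] E ⧸ I)).comp
            Algebra.TensorProduct.includeLeft := by
      refine IntermediateField.algHom_ext_of_adjoin_eq_top hs fun a ha ↦ ?_
      simpa [Ideal.Quotient.mk_eq_mk_iff_sub_mem] using (Ideal.subset_span ⟨a, ha, rfl⟩ : _ ∈ I)
    simpa [Ideal.Quotient.mk_eq_mk_iff_sub_mem] using congr($h_incl_eq x)
  · rw [Ideal.span_le]
    rintro _ ⟨a, -, rfl⟩
    exact one_smul_sub_smul_one_mem_ideal F a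

end KaehlerDifferential

theorem stmt1 (k : Type*) [Field k] :
    RingHom.ker (Algebra.TensorProduct.lmul' k (S := RatFunc k)) =
      Ideal.span {(RatFunc.X ⊗ₜ[k] 1 - 1 ⊗ₜ[k] RatFunc.X : RatFunc k ⊗[k] RatFunc k)} := by
  change KaehlerDifferential.ideal k (RatFunc k) = _
  rw [KaehlerDifferential.ideal_eq_span_of_adjoin_eq_top RatFunc.adjoin_X, Set.image_singleton,
    ← neg_sub, Ideal.span_singleton_neg]
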